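/- Let g_i : ℝ^{n_i} → ℝ and h : ℝ^{n_i} → ℝ be convex, X_i closed convex, and define for each player i the objective f_i(x_i, x_{−i}) := g_i(x_i) + Σ_{j=1}^N h(x_j), with f̄_i(x_i, x_{−i}) := f_i(x_i, x_{−i}) + 𝟙_{X_i}(x_i). Then for any η > 0, the function P(x) := Σ_{i=1}^N [g_i + 𝟙_{X_i} + h]^η(x_i) is an exact potential for the Moreau-smoothed game: for all i, all x_i, y_i ∈ X_i, and all x_{−i}, f̄^η_i(x_i, x_{−i}) − f̄^η_i(y_i, x_{−i}) = P(x_i, x_{−i}) − P(y_i, x_{−i}). -/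

import Mathlib

open Finset

/-- Moreau envelope over a set (envelope of `φ + indicator of S`). -/
noncomputable def moreauOn {E : Type*} [NormedAddCommGroup E] (η : ℝ)
    (φ : E → ℝ) (S : Set E) (z : E) : ℝ :=
  sInf ((fun y => φ y + ‖y - z‖ ^ 2 / (2 * η)) '' S)

/-!
Since every player's objective is `g_i(x_i) + h(x_i)` plus the constant `Σ_{j ≠ i} h(x_j)`,
and the Moreau envelope commutes with adding a constant, player `i`'s smoothed objective is
`[g_i + 𝟙_{X_i} + h]^η(x_i)` plus a term independent of `x_i`. In `P`, too, only the `i`-th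
summand depends on `x_i`, so both differences equal
`[g_i + 𝟙_{X_i} + h]^η(x_i) - [g_i + 𝟙_{X_i} + h]^η(y_i)`.
-/

theorem moreauOn_add_const {E : Type*} [NormedAddCommGroup E] {η : ℝ} {φ : E → ℝ} {S : Set E}
    {z : E} (hS : S.Nonempty) (hbdd : BddBelow ((fun y => φ y + ‖y - z‖ ^ 2 / (2 * η)) '' S))
    (c : ℝ) : moreauOn η (fun y => φ y + c) S z = moreauOn η φ S z + c := by
  have himage : (fun y => φ y + c + ‖y - z‖ ^ 2 / (2 * η)) '' S
      = OrderIso.addRight c '' ((fun y => φ y + ‖y - z‖ ^ 2 / (2 * η)) '' S) := by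
    rw [Set.image_image]
    exact Set.image_congr fun y _ => add_right_comm _ _ _
  rw [moreauOn, himage, ← OrderIso.map_csInf' _ (hS.image _) hbdd]
  rfl

theorem Finset.sum_apply_update {ι E M : Type*} [Fintype ι] [DecidableEq ι] [AddCommMonoid M]
    (F : ι → E → M) (x : ι → E) (i : ι) (w : E) :
    ∑ j, F j (Function.update x i w j) = F i w + ∑ j ∈ univ \ {i}, F j (x j) := by
  simp only [Function.apply_update F]
  exact sum_update_of_mem (mem_univ i) _ _

theorem stmt13 {N n : ℕ}
    (g : Fin N → EuclideanSpace ℝ (Fin n) → ℝ) (h : EuclideanSpace ℝ (Fin n) → ℝ)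
    (X : Fin N → Set (EuclideanSpace ℝ (Fin n)))
    (η : ℝ)
    (hbdd : ∀ i z,
      BddBelow ((fun y => g i y + h y + ‖y - z‖ ^ 2 / (2 * η)) '' X i)) :
    ∀ (x : Fin N → EuclideanSpace ℝ (Fin n)) (i : Fin N),
      ∀ xi ∈ X i, ∀ yi ∈ X i,
        moreauOn η (fun y => g i y + ∑ j, h (Function.update x i y j)) (X i) xi -
          moreauOn η (fun y => g i y + ∑ j, h (Function.update x i y j)) (X i) yi =
        (∑ j, moreauOn η (fun y => g j y + h y) (X j) (Function.update x i xi j)) -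
          (∑ j, moreauOn η (fun y => g j y + h y) (X j) (Function.update x i yi j)) := by
  intro x i xi hxi yi _
  have hobjective : (fun y => g i y + ∑ j, h (Function.update x i y j))
      = fun y => g i y + h y + ∑ j ∈ univ \ {i}, h (x j) := by
    funext y
    rw [sum_apply_update (fun _ => h), add_assoc]
  rw [hobjective, moreauOn_add_const ⟨xi, hxi⟩ (hbdd i xi),
    moreauOn_add_const ⟨xi, hxi⟩ (hbdd i yi),
    sum_apply_update (fun j => moreauOn η (fun y => g j y + h y) (X j)),
    sum_apply_update (fun j => moreauOn η (fun y => g j y + h y) (X j))]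
  ring
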